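/- arXiv:1910.05974 — 3 statements merged into one kernel-verified Lean document; each statement's English description precedes it below -/
import Mathlib

section
/- Let X, Y ∈ ℤ^{2×2} be X = [[0,2],[-3,0]] and Y = [[0,1],[-6,0]]. Then for every prime p there exists T_p ∈ GL_2(ℤ_(p)) with T_p X T_p^{-1} = Y, but there is no T ∈ GL_2(ℤ) with T X T^{-1} = Y. -/
open Matrix

/-- The matrices `X = [[0,2],[-3,0]]` and `Y = [[0,1],[-6,0]]` are conjugate in
`GL₂(ℤ_(p))` for every prime `p` (a matrix over `ℤ_(p)` is a rational matrix all of whose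
entries have denominator prime to `p`), but they are not conjugate in `GL₂(ℤ)`. -/
theorem stmt0 :
    (∀ p : ℕ, p.Prime →
      ∃ T : Matrix (Fin 2) (Fin 2) ℚ, IsUnit T ∧
        (∀ i j, ¬ p ∣ (T i j).den) ∧ (∀ i j, ¬ p ∣ (T⁻¹ i j).den) ∧
        T * (!![0, 2; -3, 0] : Matrix (Fin 2) (Fin 2) ℚ) = !![0, 1; -6, 0] * T) ∧
    ¬ ∃ T : (Matrix (Fin 2) (Fin 2) ℤ)ˣ,
        (T : Matrix (Fin 2) (Fin 2) ℤ) * !![0, 2; -3, 0]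
          = !![0, 1; -6, 0] * (T : Matrix (Fin 2) (Fin 2) ℤ) := by
  constructor
  · intro p hp
    by_cases h2 : p = 2
    · refine ⟨!![0,-1;3,0], ?_, ?_, ?_, ?_⟩
      · rw [Matrix.isUnit_iff_isUnit_det]; simp [Matrix.det_fin_two]
      · intro i j
        fin_cases i <;> fin_cases j <;> simp [h2]
      · have hinv : (!![(0:ℚ),-1;3,0])⁻¹ = !![0,1/3;-1,0] := by
          apply Matrix.inv_eq_right_inv
          ext i j
          fin_cases i <;> fin_cases j <;> norm_num [Matrix.mul_apply, Fin.sum_univ_two]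
        rw [hinv]
        intro i j
        fin_cases i <;> fin_cases j <;> norm_num [h2]
      · ext i j
        fin_cases i <;> fin_cases j <;> norm_num [Matrix.mul_apply, Fin.sum_univ_two]
    · have hp2 : ¬ p ∣ 2 := by
        intro h
        rcases (Nat.prime_two.eq_one_or_self_of_dvd p h) with h1 | h1 <;>
          subst h1 <;> first | exact Nat.not_prime_one hp | exact h2 rfl
      refine ⟨!![1,0;0,2], ?_, ?_, ?_, ?_⟩
      · rw [Matrix.isUnit_iff_isUnit_det]; simp [Matrix.det_fin_two]
      · intro i j
        fin_cases i <;> fin_cases j <;> simp [hp.one_lt.ne']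
      · have hinv : (!![(1:ℚ),0;0,2])⁻¹ = !![1,0;0,1/2] := by
          apply Matrix.inv_eq_right_inv
          ext i j
          fin_cases i <;> fin_cases j <;> norm_num [Matrix.mul_apply, Fin.sum_univ_two]
        rw [hinv]
        have hden : ((1:ℚ)/2).den = 2 := by norm_num
        intro i j
        fin_cases i <;> fin_cases j <;> simp [hden, hp.one_lt.ne', hp2]
      · ext i j
        fin_cases i <;> fin_cases j <;> norm_num [Matrix.mul_apply, Fin.sum_univ_two]
  · rintro ⟨T, hT⟩
    set a := (T : Matrix (Fin 2) (Fin 2) ℤ) 0 0 with ha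
    set b := (T : Matrix (Fin 2) (Fin 2) ℤ) 0 1 with hb
    set c := (T : Matrix (Fin 2) (Fin 2) ℤ) 1 0 with hc
    set d := (T : Matrix (Fin 2) (Fin 2) ℤ) 1 1 with hd
    have h00 := congrFun (congrFun hT 0) 0
    have h01 := congrFun (congrFun hT 0) 1
    simp [Matrix.mul_apply, Fin.sum_univ_two, ← ha, ← hb, ← hc, ← hd] at h00 h01
    have hdet : IsUnit ((T : Matrix (Fin 2) (Fin 2) ℤ)).det :=
      (Matrix.isUnit_iff_isUnit_det _).mp T.isUnit
    rw [Int.isUnit_iff] at hdet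
    rw [Matrix.det_fin_two, ← ha, ← hb, ← hc, ← hd] at hdet
    have hx : 0 ≤ a * a := mul_self_nonneg a
    have hy : 0 ≤ b * b := mul_self_nonneg b
    have key : a * d - b * c = 2 * (a * a) + 3 * (b * b) := by
      rw [← h01, ← h00]; ring
    rw [key] at hdet
    rcases hdet with h | h <;> omega
end

section
/- Let X = [[1,2],[0,6]] and Y = [[1,1],[0,6]] in ℤ^{2×2}. Then for every prime p the matrices X and Y are conjugate by an element of GL_2(ℤ_(p)), but X and Y are not conjugate by any element of GL_2(ℤ). -/
open Matrix

/-!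
Locally, an integer matrix `T` with `T X = Y T` whose determinant is prime to `p` already lies
in `GL₂(ℤ_(p))`, since the entries of `T⁻¹` have denominators dividing `det T`. The conjugators
`[[-1,1],[0,3]]` (determinant `-3`) and `diag(1,2)` (determinant `2`) cover all primes between them.
Globally, `T X = Y T` forces `T = [[a,b],[0,2a+5b]]`, and `a (2a+5b) = ±1` has no integer solution.
-/

theorem Matrix.den_inv_map_intCast_dvd_det {n : Type*} [Fintype n] [DecidableEq n]
    (T : Matrix n n ℤ) (i j : n) :
    ((T.map ((↑) : ℤ → ℚ))⁻¹ i j).den ∣ T.det.natAbs := by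
  have hadj : (T.map ((↑) : ℤ → ℚ)).adjugate i j = (T.adjugate i j : ℚ) :=
    (congrFun (congrFun ((Int.castRingHom ℚ).map_adjugate T) i) j).symm
  rw [inv_def, ← Int.cast_det, Ring.inverse_eq_inv', smul_apply, hadj, smul_eq_mul,
    inv_mul_eq_div, ← Rat.divInt_eq_div]
  exact Int.natAbs_dvd_natAbs.mpr (Rat.den_dvd _ _)

theorem Matrix.exists_pIntegral_conj_of_int_conj {n : Type*} [Fintype n] [DecidableEq n]
    {p : ℕ} (hp : p.Prime) {A B T : Matrix n n ℤ} (hT : ¬ (p : ℤ) ∣ T.det)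
    (hTAB : T * A = B * T) :
    ∃ S : Matrix n n ℚ, IsUnit S ∧ (∀ i j, ¬ p ∣ (S i j).den) ∧
      (∀ i j, ¬ p ∣ (S⁻¹ i j).den) ∧
      S * A.map ((↑) : ℤ → ℚ) = B.map ((↑) : ℤ → ℚ) * S := by
  have hdet : T.det ≠ 0 := fun h => hT (h ▸ dvd_zero _)
  refine ⟨T.map (↑), ?_, fun i j => ?_, fun i j hdvd => ?_, ?_⟩
  · rw [isUnit_iff_isUnit_det, ← Int.cast_det, isUnit_iff_ne_zero]
    exact_mod_cast hdet
  · simpa using hp.not_dvd_one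
  · exact hT (Int.natAbs_dvd_natAbs.mp (hdvd.trans (T.den_inv_map_intCast_dvd_det i j)))
  · simpa only [map_mul, RingHom.mapMatrix_apply, Int.coe_castRingHom] using
      congrArg (Int.castRingHom ℚ).mapMatrix hTAB

theorem not_isUnit_mul_two_mul_add_five_mul (a b : ℤ) : ¬ IsUnit (a * (2 * a + 5 * b)) := by
  intro h
  have ha := Int.isUnit_iff.mp (isUnit_of_mul_isUnit_left h)
  have hd := Int.isUnit_iff.mp (isUnit_of_mul_isUnit_right h)
  omega

theorem not_exists_intUnit_conj :
    ¬ ∃ T : (Matrix (Fin 2) (Fin 2) ℤ)ˣ,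
        (T : Matrix (Fin 2) (Fin 2) ℤ) * !![1, 2; 0, 6]
          = !![1, 1; 0, 6] * (T : Matrix (Fin 2) (Fin 2) ℤ) := by
  rintro ⟨T, h⟩
  have h00 := congrFun (congrFun h 0) 0
  have h01 := congrFun (congrFun h 0) 1
  simp only [mul_apply, Fin.sum_univ_two, of_apply, cons_val', cons_val_zero, cons_val_one,
    empty_val', cons_val_fin_one] at h00 h01
  have hc : (T : Matrix (Fin 2) (Fin 2) ℤ) 1 0 = 0 := by linarith
  have hd : (T : Matrix (Fin 2) (Fin 2) ℤ) 1 1 = 2 * T 0 0 + 5 * T 0 1 := by linarith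
  have hdet := (isUnit_iff_isUnit_det _).mp T.isUnit
  rw [det_fin_two, hc, hd, mul_zero, sub_zero] at hdet
  exact not_isUnit_mul_two_mul_add_five_mul _ _ hdet

/-- The matrices `X = [[0,2],[-3,0]]` and `Y = [[0,1],[-6,0]]` are conjugate in
`GL₂(ℤ_(p))` for every prime `p` (a matrix over `ℤ_(p)` is a rational matrix all of whose
entries have denominator prime to `p`), but they are not conjugate in `GL₂(ℤ)`. -/
theorem stmt1 :
    (∀ p : ℕ, p.Prime →
      ∃ T : Matrix (Fin 2) (Fin 2) ℚ, IsUnit T ∧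
        (∀ i j, ¬ p ∣ (T i j).den) ∧ (∀ i j, ¬ p ∣ (T⁻¹ i j).den) ∧
        T * (!![1, 2; 0, 6] : Matrix (Fin 2) (Fin 2) ℚ) = !![1, 1; 0, 6] * T) ∧
    ¬ ∃ T : (Matrix (Fin 2) (Fin 2) ℤ)ˣ,
        (T : Matrix (Fin 2) (Fin 2) ℤ) * !![1, 2; 0, 6]
          = !![1, 1; 0, 6] * (T : Matrix (Fin 2) (Fin 2) ℤ) := by
  refine ⟨fun p hp => ?_, not_exists_intUnit_conj⟩
  have hX : (!![1, 2; 0, 6] : Matrix (Fin 2) (Fin 2) ℚ)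
      = (!![1, 2; 0, 6] : Matrix (Fin 2) (Fin 2) ℤ).map (↑) := by
    ext i j; fin_cases i <;> fin_cases j <;> simp
  have hY : (!![1, 1; 0, 6] : Matrix (Fin 2) (Fin 2) ℚ)
      = (!![1, 1; 0, 6] : Matrix (Fin 2) (Fin 2) ℤ).map (↑) := by
    ext i j; fin_cases i <;> fin_cases j <;> simp
  rw [hX, hY]
  by_cases h2 : (p : ℤ) ∣ 2
  · refine exists_pIntegral_conj_of_int_conj hp (T := !![-1, 1; 0, 3]) ?_ (by decide)
    rw [det_fin_two_of]
    intro h3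
    exact (Nat.prime_iff_prime_int.mp hp).not_dvd_one (by simpa using dvd_add h3 h2)
  · exact exists_pIntegral_conj_of_int_conj hp (T := !![1, 0; 0, 2])
      (by simpa [det_fin_two_of]) (by decide)
end

section
/- Let p ≡ 3 (mod 4) be prime, k = (p²−1)/2, and s(j) the base-p digit sum of j (for 0 ≤ j < p²). For 1 ≤ j = ap + b < k with 0 ≤ a, b ≤ p−1: if 0 ≤ b ≤ (p−1)/2 and (a,b) ∉ {(0,0), ((p−1)/2,(p−1)/2)}, then s(j + k) = s(j) + s(k); and if (p+1)/2 ≤ b ≤ p−1, then s(j + k) = s(j) + s(k) − (p − 1). -/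
/-- Base-`p` digit sums for `j + k`, `k = (p²-1)/2`, `p ≡ 3 (mod 4)` prime.  Writing
`j = ap + b` with `0 ≤ a, b ≤ p - 1` and `1 ≤ j < k`, and `s(m) = m / p + m % p`:
if `b ≤ (p-1)/2` and `(a,b) ∉ {(0,0), ((p-1)/2,(p-1)/2)}` then `s(j+k) = s(j) + s(k)`,
while if `(p+1)/2 ≤ b` then `s(j+k) = s(j) + s(k) - (p-1)`. -/
theorem stmt11 (p : ℕ) (hp : p.Prime) (hp4 : p % 4 = 3)
    (k : ℕ) (hk : k = (p ^ 2 - 1) / 2)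
    (s : ℕ → ℕ) (hs : ∀ m, s m = m / p + m % p)
    (j a b : ℕ) (hj : j = a * p + b) (ha : a ≤ p - 1) (hb : b ≤ p - 1)
    (h1 : 1 ≤ j) (hjk : j < k) :
    (b ≤ (p - 1) / 2 → (a, b) ≠ (0, 0) → (a, b) ≠ ((p - 1) / 2, (p - 1) / 2) →
      s (j + k) = s j + s k) ∧
    ((p + 1) / 2 ≤ b → s (j + k) + (p - 1) = s j + s k) := by
  have hp3 : 3 ≤ p := by omega
  have hp0 : 0 < p := by omega
  obtain ⟨q, hq⟩ : ∃ q, p = 2 * q + 1 := ⟨(p - 1) / 2, by omega⟩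
  have hq1 : 1 ≤ q := by omega
  have hsq : p ^ 2 = 4 * q ^ 2 + 4 * q + 1 := by subst hq; ring
  have hk' : k = q * p + q := by
    have : q * p + q = 2 * q ^ 2 + 2 * q := by subst hq; ring
    omega
  have key : ∀ x y : ℕ, y < p → s (x * p + y) = x + y := by
    intro x y hy
    rw [hs, show x * p + y = y + x * p by ring, Nat.add_mul_div_right _ _ hp0,
      Nat.add_mul_mod_self_right, Nat.div_eq_of_lt hy, Nat.mod_eq_of_lt hy]
    ring
  have hsj : s j = a + b := by rw [hj]; exact key a b (by omega)
  have hsk : s k = q + q := by rw [hk']; exact key q q (by omega)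
  have hap : a ≤ q := by
    by_contra h
    push_neg at h
    have h2 : (q + 1) * p ≤ a * p := Nat.mul_le_mul_right p h
    rw [hj, hk'] at hjk
    nlinarith
  constructor
  · intro hb2 _ _
    have hb' : b ≤ q := by omega
    have : s (j + k) = (a + q) + (b + q) := by
      rw [hj, hk', show a * p + b + (q * p + q) = (a + q) * p + (b + q) by ring]
      exact key _ _ (by omega)
    omega
  · intro hb2
    have hb' : q + 1 ≤ b := by omega
    have hap' : a + 1 ≤ q := by
      by_contra h
      push_neg at h
      have haq : a = q := by omega
      rw [hj, hk', haq] at hjk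
      omega
    obtain ⟨c, hc⟩ : ∃ c, b = c + q + 1 := ⟨b - q - 1, by omega⟩
    have : s (j + k) = (a + q + 1) + c := by
      rw [hj, hk', hc,
        show a * p + (c + q + 1) + (q * p + q) = (a + q + 1) * p + c by subst hq; ring]
      exact key _ _ (by omega)
    omega
end
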